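/- arXiv:2409.06680 — 3 statements merged into one kernel-verified Lean document; each statement's English description precedes it below -/
import Mathlib

section
/- Vertex count for equal weights and null mean one-half, K odd: Let K ≥ 1 be an odd integer and let C := {η ∈ [0,1]^K : Σ_{k=1}^K η_k = K/2}. Then the extreme points of C are exactly the vectors having (K−1)/2 coordinates equal to 1, exactly one coordinate equal to 1/2, and the remaining (K−1)/2 coordinates equal to 0; consequently the number of extreme points of C is K · C(K−1, (K−1)/2), where C(n,m) denotes the binomial coefficient. -/
private lemma sum_eq_card_filter {K : ℕ} (s : Finset (Fin K)) (f : Fin K → ℝ)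
    (h : ∀ k ∈ s, f k = 0 ∨ f k = 1) :
    ∑ k ∈ s, f k = (s.filter fun k => f k = 1).card := by
  classical
  rw [← Finset.sum_filter_add_sum_filter_not s (fun k => f k = 1)]
  rw [Finset.sum_congr rfl (fun k hk => (Finset.mem_filter.mp hk).2)]
  have h0 : ∑ k ∈ s.filter (fun k => ¬ f k = 1), f k = 0 := by
    apply Finset.sum_eq_zero
    intro k hk
    rcases h k (Finset.mem_filter.mp hk).1 with h' | h'
    · exact h'
    · exact absurd h' (Finset.mem_filter.mp hk).2
  rw [h0, add_zero, Finset.sum_const, nsmul_eq_mul, mul_one]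

private lemma extreme_frac_unique (K : ℕ) (η : Fin K → ℝ)
    (hext : η ∈ Set.extremePoints ℝ
      {x : Fin K → ℝ | (∀ k, x k ∈ Set.Icc (0:ℝ) 1) ∧ ∑ k, x k = (K:ℝ)/2})
    (i j : Fin K) (hi0 : η i ≠ 0) (hi1 : η i ≠ 1) (hj0 : η j ≠ 0) (hj1 : η j ≠ 1) : i = j := by
  classical
  by_contra hij
  obtain ⟨hmem, hex⟩ := mem_extremePoints.mp hext
  obtain ⟨hbd, hsum⟩ := hmem
  have hi0' : 0 < η i := lt_of_le_of_ne (hbd i).1 (Ne.symm hi0)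
  have hi1' : η i < 1 := lt_of_le_of_ne (hbd i).2 hi1
  have hj0' : 0 < η j := lt_of_le_of_ne (hbd j).1 (Ne.symm hj0)
  have hj1' : η j < 1 := lt_of_le_of_ne (hbd j).2 hj1
  set ε : ℝ := min (min (η i) (1 - η i)) (min (η j) (1 - η j)) with hεdef
  have hε : 0 < ε := by
    simp only [hεdef, lt_min_iff]
    refine ⟨⟨hi0', by linarith⟩, hj0', by linarith⟩
  have hε1 : ε ≤ η i := le_trans (min_le_left _ _) (min_le_left _ _)
  have hε2 : ε ≤ 1 - η i := le_trans (min_le_left _ _) (min_le_right _ _)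
  have hε3 : ε ≤ η j := le_trans (min_le_right _ _) (min_le_left _ _)
  have hε4 : ε ≤ 1 - η j := le_trans (min_le_right _ _) (min_le_right _ _)
  set x₁ : Fin K → ℝ := fun k => η k + (if k = i then ε else 0) - (if k = j then ε else 0) with hx₁
  set x₂ : Fin K → ℝ := fun k => η k - (if k = i then ε else 0) + (if k = j then ε else 0) with hx₂
  have hsum_ite : ∀ (a : Fin K), ∑ k, (if k = a then ε else 0) = ε := by
    intro a
    rw [Finset.sum_ite_eq' Finset.univ a (fun _ => ε)]
    simp
  have hm1 : x₁ ∈ {x : Fin K → ℝ | (∀ k, x k ∈ Set.Icc (0:ℝ) 1) ∧ ∑ k, x k = (K:ℝ)/2} := by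
    constructor
    · intro k
      by_cases hki : k = i
      · subst hki
        simp only [hx₁, if_pos rfl, if_true, if_neg hij, Set.mem_Icc]
        constructor <;> linarith
      · by_cases hkj : k = j
        · subst hkj
          simp only [hx₁, if_neg hki, if_pos rfl, if_true, Set.mem_Icc]
          have := hbd k
          rw [Set.mem_Icc] at this
          constructor <;> linarith
        · simp only [hx₁, if_neg hki, if_neg hkj, Set.mem_Icc]
          have := hbd k
          rw [Set.mem_Icc] at this
          constructor <;> linarith
    · simp only [hx₁]
      rw [Finset.sum_sub_distrib, Finset.sum_add_distrib, hsum_ite i, hsum_ite j, hsum]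
      ring
  have hm2 : x₂ ∈ {x : Fin K → ℝ | (∀ k, x k ∈ Set.Icc (0:ℝ) 1) ∧ ∑ k, x k = (K:ℝ)/2} := by
    constructor
    · intro k
      by_cases hki : k = i
      · subst hki
        simp only [hx₂, if_pos rfl, if_true, if_neg hij, Set.mem_Icc]
        constructor <;> linarith
      · by_cases hkj : k = j
        · subst hkj
          simp only [hx₂, if_neg hki, if_pos rfl, if_true, Set.mem_Icc]
          constructor <;> linarith
        · simp only [hx₂, if_neg hki, if_neg hkj, Set.mem_Icc]
          have := hbd k
          rw [Set.mem_Icc] at this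
          constructor <;> linarith
    · simp only [hx₂]
      rw [Finset.sum_add_distrib, Finset.sum_sub_distrib, hsum_ite i, hsum_ite j, hsum]
      ring
  have hseg : η ∈ openSegment ℝ x₁ x₂ := by
    refine ⟨1/2, 1/2, by norm_num, by norm_num, by norm_num, ?_⟩
    funext k
    simp only [Pi.add_apply, Pi.smul_apply, smul_eq_mul, hx₁, hx₂]
    ring
  have := (hex x₁ hm1 x₂ hm2 hseg).1
  have := congrFun this i
  simp only [hx₁, if_pos rfl, if_true, if_neg hij] at this
  linarith

/-- **Vertex count for equal weights and null mean one-half, `K` odd.**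
For odd `K ≥ 1` and `C = {η ∈ [0,1]^K : ∑ k, η k = K/2}`, the extreme points of `C` are
exactly the vectors having `(K−1)/2` coordinates equal to `1`, exactly one coordinate equal
to `1/2`, and the remaining `(K−1)/2` coordinates equal to `0`; hence the number of extreme
points is `K * C(K−1, (K−1)/2)`. -/
theorem vertex_count_odd (K : ℕ) (hK : 1 ≤ K) (hOdd : Odd K)
    (C : Set (Fin K → ℝ))
    (hC : C = {η | (∀ k, η k ∈ Set.Icc (0 : ℝ) 1) ∧ ∑ k, η k = (K : ℝ) / 2}) :
    Set.extremePoints ℝ C =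
      {η | ∃ j : Fin K, η j = (1 : ℝ) / 2 ∧ (∀ k, k ≠ j → η k = 0 ∨ η k = 1) ∧
        (Finset.univ.filter fun k => η k = 1).card = (K - 1) / 2 ∧
        (Finset.univ.filter fun k => η k = 0).card = (K - 1) / 2} ∧
    (Set.extremePoints ℝ C).ncard = K * Nat.choose (K - 1) ((K - 1) / 2) := by
  classical
  subst hC
  obtain ⟨m, hKm⟩ := hOdd
  have hset : Set.extremePoints ℝ
      {η : Fin K → ℝ | (∀ k, η k ∈ Set.Icc (0 : ℝ) 1) ∧ ∑ k, η k = (K : ℝ) / 2} =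
      {η | ∃ j : Fin K, η j = (1 : ℝ) / 2 ∧ (∀ k, k ≠ j → η k = 0 ∨ η k = 1) ∧
        (Finset.univ.filter fun k => η k = 1).card = (K - 1) / 2 ∧
        (Finset.univ.filter fun k => η k = 0).card = (K - 1) / 2} := by
    ext η
    constructor
    · intro hext
      obtain ⟨⟨hbd, hsum⟩, hex⟩ := mem_extremePoints.mp hext
      have hexists : ∃ j, η j ≠ 0 ∧ η j ≠ 1 := by
        by_contra hall
        push_neg at hall
        have h01 : ∀ k ∈ Finset.univ, η k = 0 ∨ η k = 1 := by
          intro k _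
          by_cases h : η k = 0
          · exact Or.inl h
          · exact Or.inr (hall k h)
        have hh := sum_eq_card_filter Finset.univ η h01
        rw [hsum] at hh
        have h2 : (K : ℝ) = 2 * ((Finset.univ.filter fun k => η k = 1).card : ℝ) := by
          linarith
        have h3 : K = 2 * (Finset.univ.filter fun k => η k = 1).card := by exact_mod_cast h2
        omega
      obtain ⟨j, hj0, hj1⟩ := hexists
      have huniq : ∀ k, η k ≠ 0 → η k ≠ 1 → k = j := fun k h0 h1 =>
        extreme_frac_unique K η hext k j h0 h1 hj0 hj1
      have hothers : ∀ k, k ≠ j → η k = 0 ∨ η k = 1 := by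
        intro k hk
        by_cases h0 : η k = 0
        · exact Or.inl h0
        · by_cases h1 : η k = 1
          · exact Or.inr h1
          · exact absurd (huniq k h0 h1) hk
      have hTsub : (Finset.univ.filter fun k => η k = 1) ⊆ Finset.univ.erase j := by
        intro k hk
        rw [Finset.mem_filter] at hk
        rw [Finset.mem_erase]
        exact ⟨fun h => hj1 (h ▸ hk.2), Finset.mem_univ k⟩
      have hTfil : (Finset.univ.erase j).filter (fun k => η k = 1) =
          (Finset.univ.filter fun k => η k = 1) := by
        ext k
        constructor
        · intro hk
          exact Finset.mem_filter.mpr ⟨Finset.mem_univ k, (Finset.mem_filter.mp hk).2⟩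
        · intro hk
          have h := (Finset.mem_filter.mp hk).2
          exact Finset.mem_filter.mpr
            ⟨Finset.mem_erase.mpr ⟨fun he => hj1 (he ▸ h), Finset.mem_univ k⟩, h⟩
      have hsum' : ∑ k ∈ Finset.univ.erase j, η k + η j = (K : ℝ) / 2 := by
        rw [Finset.sum_erase_add _ _ (Finset.mem_univ j)]; exact hsum
      have hsumT : ∑ k ∈ Finset.univ.erase j, η k =
          (((Finset.univ.filter fun k => η k = 1)).card : ℝ) := by
        rw [sum_eq_card_filter _ _ (fun k hk => hothers k (Finset.mem_erase.mp hk).1), hTfil]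
      have hηj : η j = (K : ℝ) / 2 - ((Finset.univ.filter fun k => η k = 1)).card := by
        rw [hsumT] at hsum'; linarith
      have h0 : 0 < η j := lt_of_le_of_ne (hbd j).1 (Ne.symm hj0)
      have h1 : η j < 1 := lt_of_le_of_ne (hbd j).2 hj1
      have hlt1 : 2 * ((Finset.univ.filter fun k => η k = 1)).card < K := by
        have : (2 * ((Finset.univ.filter fun k => η k = 1)).card : ℝ) < K := by
          rw [hηj] at h0; push_cast; linarith
        exact_mod_cast this
      have hlt2 : K < 2 * ((Finset.univ.filter fun k => η k = 1)).card + 2 := by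
        have : (K : ℝ) < 2 * ((Finset.univ.filter fun k => η k = 1)).card + 2 := by
          rw [hηj] at h1; push_cast; linarith
        exact_mod_cast this
      have hTc : K = 2 * ((Finset.univ.filter fun k => η k = 1)).card + 1 := by omega
      have hcast : (K : ℝ) = 2 * ((Finset.univ.filter fun k => η k = 1)).card + 1 := by
        exact_mod_cast hTc
      have hηj2 : η j = 1 / 2 := by
        rw [hηj, hcast]; ring
      refine ⟨j, hηj2, hothers, by omega, ?_⟩
      have hZ : Finset.univ.filter (fun k => η k = 0) =
          (Finset.univ.erase j) \ (Finset.univ.filter fun k => η k = 1) := by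
        ext k
        constructor
        · intro hk
          have h := (Finset.mem_filter.mp hk).2
          rw [Finset.mem_sdiff, Finset.mem_erase, Finset.mem_filter]
          refine ⟨⟨fun he => hj0 (he ▸ h), Finset.mem_univ k⟩, fun h1' => ?_⟩
          rw [h] at h1'
          norm_num at h1'
        · intro hk
          rw [Finset.mem_sdiff, Finset.mem_erase, Finset.mem_filter] at hk
          obtain ⟨⟨hkj, -⟩, hk1⟩ := hk
          rw [Finset.mem_filter]
          refine ⟨Finset.mem_univ k, ?_⟩
          rcases hothers k hkj with h | h
          · exact h
          · exact absurd h (fun hh => hk1 ⟨Finset.mem_univ k, hh⟩)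
      rw [hZ, Finset.card_sdiff_of_subset hTsub, Finset.card_erase_of_mem (Finset.mem_univ j),
        Finset.card_univ, Fintype.card_fin]
      omega
    · rintro ⟨j, hj, hothers, hT1, hT0⟩
      have hbd : ∀ k, η k ∈ Set.Icc (0:ℝ) 1 := by
        intro k
        by_cases hk : k = j
        · subst hk; rw [hj]; constructor <;> norm_num
        · rcases hothers k hk with h | h <;> rw [h] <;> constructor <;> norm_num
      have hTfil : (Finset.univ.erase j).filter (fun k => η k = 1) =
          Finset.univ.filter (fun k => η k = 1) := by
        ext k
        simp only [Finset.mem_filter, Finset.mem_erase, Finset.mem_univ, true_and]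
        constructor
        · rintro ⟨_, h⟩; exact h
        · intro h
          refine ⟨⟨fun he => ?_, trivial⟩, h⟩
          rw [he, hj] at h; norm_num at h
      have hsum : ∑ k, η k = (K : ℝ) / 2 := by
        rw [← Finset.sum_erase_add _ _ (Finset.mem_univ j), hj,
          sum_eq_card_filter _ _ (fun k hk => hothers k (Finset.mem_erase.mp hk).1), hTfil, hT1]
        have : ((K - 1) / 2 : ℕ) = m := by omega
        rw [this, hKm]
        push_cast
        ring
      refine mem_extremePoints.mpr ⟨⟨hbd, hsum⟩, ?_⟩
      intro x₁ hx₁ x₂ hx₂ hseg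
      obtain ⟨a, b, ha, hb, hab, hxy⟩ := hseg
      have key : ∀ k, k ≠ j → x₁ k = η k ∧ x₂ k = η k := by
        intro k hk
        have hv := congrFun hxy k
        simp only [Pi.add_apply, Pi.smul_apply, smul_eq_mul] at hv
        have b1 := hx₁.1 k
        have b2 := hx₂.1 k
        rw [Set.mem_Icc] at b1 b2
        rcases hothers k hk with h | h
        · rw [h] at hv ⊢
          constructor
          · refine le_antisymm ?_ b1.1
            nlinarith [mul_nonneg hb.le b2.1]
          · refine le_antisymm ?_ b2.1
            nlinarith [mul_nonneg ha.le b1.1]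
        · rw [h] at hv ⊢
          constructor
          · refine le_antisymm b1.2 ?_
            nlinarith [mul_le_mul_of_nonneg_left b2.2 hb.le]
          · refine le_antisymm b2.2 ?_
            nlinarith [mul_le_mul_of_nonneg_left b1.2 ha.le]
      have hxj : ∀ x : Fin K → ℝ, x ∈ {x : Fin K → ℝ | (∀ k, x k ∈ Set.Icc (0:ℝ) 1) ∧
          ∑ k, x k = (K:ℝ)/2} → (∀ k, k ≠ j → x k = η k) → x = η := by
        intro x hx hkeq
        have e1 : ∑ k ∈ Finset.univ.erase j, x k = ∑ k ∈ Finset.univ.erase j, η k :=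
          Finset.sum_congr rfl (fun k hk => hkeq k (Finset.mem_erase.mp hk).1)
        have e2 : ∑ k ∈ Finset.univ.erase j, x k + x j = (K:ℝ)/2 := by
          rw [Finset.sum_erase_add _ _ (Finset.mem_univ j)]; exact hx.2
        have e3 : ∑ k ∈ Finset.univ.erase j, η k + η j = (K:ℝ)/2 := by
          rw [Finset.sum_erase_add _ _ (Finset.mem_univ j)]; exact hsum
        have : x j = η j := by rw [e1] at e2; linarith
        funext k
        by_cases hk : k = j
        · subst hk; exact this
        · exact hkeq k hk
      exact ⟨hxj x₁ hx₁ (fun k hk => (key k hk).1), hxj x₂ hx₂ (fun k hk => (key k hk).2)⟩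
  refine ⟨hset, ?_⟩
  rw [hset]
  set v : Fin K → Finset (Fin K) → (Fin K → ℝ) :=
    fun j S k => if k = j then 1/2 else if k ∈ S then 1 else 0 with hv
  set D : Finset ((_ : Fin K) × Finset (Fin K)) :=
    Finset.univ.sigma fun j : Fin K => (Finset.univ.erase j).powersetCard m with hD
  have hvmem : ∀ p ∈ D, ∀ q ∈ D, v p.1 p.2 = v q.1 q.2 → p = q := by
    rintro ⟨j, S⟩ hp ⟨j', S'⟩ hq heq
    rw [hD, Finset.mem_sigma, Finset.mem_powersetCard] at hp hq
    have hjS : j ∉ S := fun h => (Finset.mem_erase.mp (hp.2.1 h)).1 rfl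
    have hjS' : j' ∉ S' := fun h => (Finset.mem_erase.mp (hq.2.1 h)).1 rfl
    have hjj : j = j' := by
      by_contra hne
      have := congrFun heq j
      rw [hv] at this
      simp only [if_pos rfl, if_neg hne] at this
      by_cases h : j ∈ S' <;> simp [h] at this <;> norm_num at this
    subst hjj
    have hSS : S = S' := by
      ext k
      by_cases hk : k = j
      · subst hk; simp [hjS, hjS']
      · have := congrFun heq k
        rw [hv] at this
        simp only [if_neg hk] at this
        by_cases h1 : k ∈ S <;> by_cases h2 : k ∈ S' <;>
          simp [h1, h2] at this ⊢ <;> norm_num at this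
    rw [hSS]
  have hE : {η : Fin K → ℝ | ∃ j : Fin K, η j = (1 : ℝ) / 2 ∧
        (∀ k, k ≠ j → η k = 0 ∨ η k = 1) ∧
        (Finset.univ.filter fun k => η k = 1).card = (K - 1) / 2 ∧
        (Finset.univ.filter fun k => η k = 0).card = (K - 1) / 2} =
      ↑(D.image fun p => v p.1 p.2) := by
    ext η
    simp only [Set.mem_setOf_eq, Finset.coe_image, Set.mem_image, Finset.mem_coe]
    constructor
    · rintro ⟨j, hj, hothers, hT1, hT0⟩
      refine ⟨⟨j, Finset.univ.filter (fun k => η k = 1)⟩, ?_, ?_⟩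
      · rw [hD, Finset.mem_sigma, Finset.mem_powersetCard]
        dsimp only
        refine ⟨Finset.mem_univ j, ?_, by omega⟩
        intro k hk
        rw [Finset.mem_filter] at hk
        have hk2 := hk.2
        rw [Finset.mem_erase]
        refine ⟨fun he => ?_, Finset.mem_univ k⟩
        rw [he, hj] at hk2; norm_num at hk2
      · funext k
        rw [hv]
        dsimp only
        by_cases hk : k = j
        · subst hk; rw [if_pos rfl, hj]
        · rw [if_neg hk]
          rcases hothers k hk with h | h
          · rw [if_neg, h]
            intro hmem
            rw [(Finset.mem_filter.mp hmem).2] at h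
            norm_num at h
          · rw [if_pos (Finset.mem_filter.mpr ⟨Finset.mem_univ k, h⟩), h]
    · rintro ⟨⟨j, S⟩, hp, heq⟩
      rw [hD, Finset.mem_sigma, Finset.mem_powersetCard] at hp
      obtain ⟨-, hSsub, hScard⟩ := hp
      have hjS : j ∉ S := fun h => (Finset.mem_erase.mp (hSsub h)).1 rfl
      subst heq
      have hSsub' : S ⊆ Finset.univ.erase j := hSsub
      have hScard' : S.card = m := hScard
      refine ⟨j, ?_, ?_, ?_, ?_⟩
      · rw [hv]; dsimp only; rw [if_pos rfl]
      · intro k hk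
        rw [hv]
        dsimp only
        rw [if_neg hk]
        by_cases h : k ∈ S
        · right; rw [if_pos h]
        · left; rw [if_neg h]
      · have hfe : (Finset.univ.filter fun k => v j S k = 1) = S := by
          ext k
          simp only [Finset.mem_filter, Finset.mem_univ, true_and, hv]
          by_cases hk : k = j
          · subst hk
            rw [if_pos rfl]
            constructor
            · intro h; norm_num at h
            · intro h; exact absurd h hjS
          · rw [if_neg hk]
            by_cases h : k ∈ S
            · rw [if_pos h]; simp [h]
            · rw [if_neg h]; simp [h]
        rw [hfe, hScard']; omega
      · have hfe : (Finset.univ.filter fun k => v j S k = 0) = (Finset.univ.erase j) \ S := by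
          ext k
          simp only [Finset.mem_filter, Finset.mem_univ, true_and, Finset.mem_sdiff,
            Finset.mem_erase, hv]
          by_cases hk : k = j
          · subst hk
            rw [if_pos rfl]
            constructor
            · intro h; norm_num at h
            · rintro ⟨⟨h, -⟩, -⟩; exact absurd rfl h
          · rw [if_neg hk]
            by_cases h : k ∈ S
            · rw [if_pos h]; simp [h, hk]
            · rw [if_neg h]; simp [h, hk]
        rw [hfe, Finset.card_sdiff_of_subset hSsub', Finset.card_erase_of_mem (Finset.mem_univ j),
          Finset.card_univ, Fintype.card_fin, hScard']
        omega
  rw [hE, Set.ncard_coe_finset, Finset.card_image_of_injOn hvmem, hD, Finset.card_sigma]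
  have hc : ∀ j : Fin K, ((Finset.univ.erase j).powersetCard m).card =
      Nat.choose (K - 1) ((K - 1) / 2) := by
    intro j
    rw [Finset.card_powersetCard, Finset.card_erase_of_mem (Finset.mem_univ j),
      Finset.card_univ, Fintype.card_fin]
    congr 1
    omega
  rw [Finset.sum_congr rfl (fun j _ => hc j), Finset.sum_const, Finset.card_univ,
    Fintype.card_fin, smul_eq_mul]
end

section
/- Log-convexity of the intersection test supermartingale under inverse bets: Fix an integer K ≥ 1, sample sizes T_1,…,T_K ∈ ℕ, and real numbers c_{k,i} ∈ [0,1] and x_{k,i} ∈ (0,1] for k ∈ {1,…,K} and i ∈ {1,…,T_k}. Then for every η ∈ (0,∞)^K each term 1 − c_{k,i} + c_{k,i}·x_{k,i}/η_k is strictly positive, and the function f(η) := Σ_{k=1}^K Σ_{i=1}^{T_k} log(1 − c_{k,i} + c_{k,i}·x_{k,i}/η_k) is convex on (0,∞)^K. -/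
open Set Real

lemma key_convex (a b : ℝ) (ha : 0 ≤ a) (hb : 0 ≤ b) :
    ConvexOn ℝ (Set.Ioi (0:ℝ)) (fun t => Real.log (a + b / t)) := by
  rcases eq_or_lt_of_le (by linarith : (0:ℝ) ≤ a + b) with h0 | hab
  · have haz : a = 0 := by linarith
    have hbz : b = 0 := by linarith
    simp only [haz, hbz, zero_div, add_zero, Real.log_zero]
    exact convexOn_const 0 (convex_Ioi 0)
  have hden : ∀ t : ℝ, 0 < t → 0 < a * t + b := by
    intro t ht
    rcases eq_or_lt_of_le hb with hb0 | hb0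
    · have haa : 0 < a := by linarith
      nlinarith
    · nlinarith [mul_nonneg ha ht.le]
  have hpos : ∀ t : ℝ, 0 < t → 0 < a + b / t := by
    intro t ht
    have := hden t ht
    have h2 : a + b / t = (a * t + b) / t := by field_simp
    rw [h2]; positivity
  have hint : interior (Set.Ioi (0:ℝ)) = Set.Ioi 0 := interior_Ioi
  have hd1 : ∀ t : ℝ, 0 < t →
      HasDerivAt (fun t => Real.log (a + b / t)) (-b / (t * (a * t + b))) t := by
    intro t ht
    have h1 : HasDerivAt (fun t : ℝ => a + b / t) (b * -(t ^ 2)⁻¹) t :=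
      ((hasDerivAt_inv ht.ne').const_mul b).const_add a
    have h2 := h1.log (hpos t ht).ne'
    convert h2 using 1
    have h3 : a * t + b ≠ 0 := (hden t ht).ne'
    field_simp
  have hd2 : ∀ t : ℝ, 0 < t →
      HasDerivAt (fun t : ℝ => -b / (t * (a * t + b)))
        (b * (2 * a * t + b) / (t * (a * t + b)) ^ 2) t := by
    intro t ht
    have hdne : t * (a * t + b) ≠ 0 := (mul_pos ht (hden t ht)).ne'
    have h1 : HasDerivAt (fun t : ℝ => t * (a * t + b)) (1 * (a * t + b) + t * a) t := by
      simpa using (hasDerivAt_id' t).fun_mul (((hasDerivAt_id' t).const_mul a).add_const b)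
    have h2 := (hasDerivAt_const t (-b)).fun_div h1 hdne
    refine h2.congr_deriv ?_
    congr 1
    ring
  refine convexOn_of_hasDerivWithinAt2_nonneg (convex_Ioi 0)
    (f' := fun t => -b / (t * (a * t + b)))
    (f'' := fun t => b * (2 * a * t + b) / (t * (a * t + b)) ^ 2) ?_ ?_ ?_ ?_
  · intro t ht
    exact ((hd1 t ht).continuousAt).continuousWithinAt
  · intro t ht
    rw [hint] at ht
    exact (hd1 t ht).hasDerivWithinAt
  · intro t ht
    rw [hint] at ht
    exact (hd2 t ht).hasDerivWithinAt
  · intro t ht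
    rw [hint] at ht
    have ht : (0:ℝ) < t := ht
    have := hden t ht
    positivity

lemma convexOn_finset_sum {ι E : Type*} [AddCommGroup E] [Module ℝ E]
    {S : Set E} (hS : Convex ℝ S) (s : Finset ι) (f : ι → E → ℝ)
    (h : ∀ i ∈ s, ConvexOn ℝ S (f i)) :
    ConvexOn ℝ S (fun x => ∑ i ∈ s, f i x) := by
  classical
  induction s using Finset.induction_on with
  | empty => simpa using convexOn_const 0 hS
  | insert a s hni ih =>
    simp only [Finset.sum_insert hni]
    exact (h a (Finset.mem_insert_self a s)).add
      (ih fun i hi => h i (Finset.mem_insert_of_mem hi))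

/-- **Log-convexity of the intersection test supermartingale under inverse bets.**
With tuning parameters `c k i ∈ [0,1]` and samples `x k i ∈ (0,1]`, each term
`1 − c k i + c k i * x k i / η k` is strictly positive for `η ∈ (0,∞)^K`, and
`f η = ∑_k ∑_{i < T k} log(1 − c k i + c k i * x k i / η k)` is convex on `(0,∞)^K`. -/
theorem inverse_bets_log_convex (K : ℕ) (hK : 1 ≤ K) (T : Fin K → ℕ)
    (c : Fin K → ℕ → ℝ) (x : Fin K → ℕ → ℝ)
    (hc : ∀ k, ∀ i < T k, c k i ∈ Set.Icc (0 : ℝ) 1)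
    (hx : ∀ k, ∀ i < T k, x k i ∈ Set.Ioc (0 : ℝ) 1) :
    (∀ η : Fin K → ℝ, (∀ k, 0 < η k) →
      ∀ k, ∀ i < T k, 0 < 1 - c k i + c k i * x k i / η k) ∧
    ConvexOn ℝ {η : Fin K → ℝ | ∀ k, 0 < η k}
      (fun η => ∑ k, ∑ i ∈ Finset.range (T k),
        Real.log (1 - c k i + c k i * x k i / η k)) := by
  have hSeq : {η : Fin K → ℝ | ∀ k, 0 < η k}
      = Set.univ.pi (fun _ : Fin K => Set.Ioi (0:ℝ)) := by
    ext η; simp only [Set.mem_setOf_eq, Set.mem_pi, Set.mem_univ, Set.mem_Ioi, true_implies]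
  have hSconv : Convex ℝ {η : Fin K → ℝ | ∀ k, 0 < η k} := by
    rw [hSeq]; exact convex_pi fun i _ => convex_Ioi 0
  constructor
  · intro η hη k i hi
    obtain ⟨hc0, hc1⟩ := hc k i hi
    obtain ⟨hx0, _⟩ := hx k i hi
    have hη k' := hη k'
    have hnum : 0 < (1 - c k i) * η k + c k i * x k i := by
      rcases eq_or_lt_of_le hc1 with h1 | h1
      · rw [← h1]; simpa using mul_pos (by linarith : (0:ℝ) < c k i) hx0
      · nlinarith [mul_nonneg hc0 hx0.le, hη k]
    have : 1 - c k i + c k i * x k i / η k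
        = ((1 - c k i) * η k + c k i * x k i) / η k := by
      have hne : η k ≠ 0 := (hη k).ne'
      field_simp
    rw [this]
    exact div_pos hnum (hη k)
  · apply convexOn_finset_sum hSconv
    intro k _
    apply convexOn_finset_sum hSconv
    intro i hi
    rw [Finset.mem_range] at hi
    obtain ⟨hc0, hc1⟩ := hc k i hi
    obtain ⟨hx0, _⟩ := hx k i hi
    have hkey := key_convex (1 - c k i) (c k i * x k i) (by linarith)
      (mul_nonneg hc0 hx0.le)
    have hcomp := hkey.comp_affineMap (LinearMap.proj (R := ℝ)
      (φ := fun _ : Fin K => ℝ) k).toAffineMap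
    exact hcomp.subset (fun η hη => hη k) hSconv
end

section
/- Log-convexity of the betting term under the negative-exponential bet: For every x ∈ [0,1], the quantity 1 + e^{−η}(x − η) is strictly positive for all η ∈ [0,1], and the function η ↦ log(1 + e^{−η}(x − η)) is convex on [0,1]. -/
/-- **Log-convexity of the betting term under the negative-exponential bet.**
For every `x ∈ [0,1]`, the quantity `1 + e^{−η}(x − η)` is strictly positive for all
`η ∈ [0,1]`, and `η ↦ log(1 + e^{−η}(x − η))` is convex on `[0,1]`. -/
theorem neg_exp_bet_log_convex (x : ℝ) (hx : x ∈ Set.Icc (0 : ℝ) 1) :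
    (∀ η ∈ Set.Icc (0 : ℝ) 1, 0 < 1 + Real.exp (-η) * (x - η)) ∧
    ConvexOn ℝ (Set.Icc (0 : ℝ) 1)
      (fun η => Real.log (1 + Real.exp (-η) * (x - η))) := by
  obtain ⟨hx0, hx1⟩ := hx
  -- h η := exp η - η + x is positive everywhere
  have hpos : ∀ η : ℝ, 0 < Real.exp η - η + x := by
    intro η
    have := Real.add_one_le_exp η
    linarith
  -- key factorization
  have hfact : ∀ η : ℝ, 1 + Real.exp (-η) * (x - η)
      = Real.exp (-η) * (Real.exp η - η + x) := by
    intro η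
    have he : Real.exp (-η) * Real.exp η = 1 := by
      rw [← Real.exp_add]; simp
    linear_combination -he
  have hterm : ∀ η : ℝ, 0 < 1 + Real.exp (-η) * (x - η) := by
    intro η
    rw [hfact η]
    exact mul_pos (Real.exp_pos _) (hpos η)
  refine ⟨fun η _ => hterm η, ?_⟩
  -- rewrite the function as (-η) + log (exp η - η + x)
  have hfun : (fun η => Real.log (1 + Real.exp (-η) * (x - η)))
      = fun η => -η + Real.log (Real.exp η - η + x) := by
    funext η
    rw [hfact η, Real.log_mul (Real.exp_pos _).ne' (hpos η).ne', Real.log_exp]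
  rw [hfun]
  have hlin : ConvexOn ℝ (Set.Icc (0 : ℝ) 1) (fun η : ℝ => -η) :=
    (concaveOn_id (convex_Icc 0 1)).neg
  refine hlin.add ?_
  -- convexity of log (exp η - η + x) via second derivative
  refine convexOn_of_hasDerivWithinAt2_nonneg (convex_Icc 0 1)
    (f' := fun η => (Real.exp η - 1) / (Real.exp η - η + x))
    (f'' := fun η => (Real.exp η * (Real.exp η - η + x)
      - (Real.exp η - 1) * (Real.exp η - 1)) / (Real.exp η - η + x) ^ 2)
    ?_ ?_ ?_ ?_
  · exact (((Real.continuous_exp.sub continuous_id).add continuous_const).log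
      (fun η => (hpos η).ne')).continuousOn
  · intro η _
    have h1 : HasDerivAt (fun η : ℝ => Real.exp η - η + x) (Real.exp η - 1) η := by
      simpa using ((Real.hasDerivAt_exp η).sub (hasDerivAt_id η)).add_const x
    exact (h1.log (hpos η).ne').hasDerivWithinAt
  · intro η _
    have h1 : HasDerivAt (fun η : ℝ => Real.exp η - 1) (Real.exp η) η := by
      simpa using (Real.hasDerivAt_exp η).sub_const 1
    have h2 : HasDerivAt (fun η : ℝ => Real.exp η - η + x) (Real.exp η - 1) η := by
      simpa using ((Real.hasDerivAt_exp η).sub (hasDerivAt_id η)).add_const x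
    exact (h1.div h2 (hpos η).ne').hasDerivWithinAt
  · intro η hη
    rw [interior_Icc] at hη
    obtain ⟨hη0, hη1⟩ := hη
    have hnum : 0 ≤ Real.exp η * (Real.exp η - η + x)
        - (Real.exp η - 1) * (Real.exp η - 1) := by
      nlinarith [Real.add_one_le_exp η, Real.exp_pos η]
    positivity
end
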